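/- arXiv:1908.00964 — 2 statements merged into one kernel-verified Lean document; each statement's English description precedes it below -/
import Mathlib

section
/- Let n, m be natural numbers with m ≤ n(n-1)/2. Then log (binom(n(n-1)/2, m)) ≤ m · log n + n · s(2m/n), where s(x) = x/2 - (x/2)·log x for x > 0 and s(0) = 0. In particular, log (binom(n(n-1)/2, m)) ≤ m · log n + n/2. -/
/-- The function `s(x) = x/2 - (x/2)·log x` for `x > 0`, with `s(0) = 0`. -/
noncomputable def sFun (x : ℝ) : ℝ := if x = 0 then 0 else x / 2 - x / 2 * Real.log x

/-!
With `N = n(n-1)/2 ≤ n²/2`, the estimate `m! ≥ (m/e)^m` gives `binom(N, m) ≤ (eN/m)^m`, so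
`log binom(N, m) ≤ m (1 + log (n²/(2m)))`, which is exactly `m log n + n s(2m/n)`.
The weaker bound is `s ≤ 1/2`, i.e. `log x ≥ 1 - 1/x`.
-/

open Real
open scoped Nat

theorem Nat.choose_le_exp_mul_div_pow (n k : ℕ) :
    (n.choose k : ℝ) ≤ (exp 1 * n / k) ^ k := by
  rcases k.eq_zero_or_pos with rfl | hk
  · simp
  have hk' : (0 : ℝ) < k := by exact_mod_cast hk
  calc (n.choose k : ℝ) ≤ (n : ℝ) ^ k / k ! := choose_le_pow_div k n
    _ = (n / k : ℝ) ^ k * ((k : ℝ) ^ k / k !) := by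
      rw [div_pow]; field_simp
    _ ≤ (n / k : ℝ) ^ k * exp k := by
      gcongr; exact pow_div_factorial_le_exp k hk'.le k
    _ = (exp 1 * n / k) ^ k := by
      rw [← exp_one_pow, ← mul_pow]; ring

theorem Nat.log_choose_le_mul_one_add_log_div {n k : ℕ} (hk : 0 < k) (hkn : k ≤ n) :
    Real.log (n.choose k) ≤ k * (1 + Real.log (n / k)) := by
  have hk' : (0 : ℝ) < k := by exact_mod_cast hk
  have hn' : (0 : ℝ) < n := by exact_mod_cast hk.trans_le hkn
  calc Real.log (n.choose k) ≤ Real.log ((exp 1 * n / k) ^ k) :=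
        log_le_log (by exact_mod_cast choose_pos hkn) (choose_le_exp_mul_div_pow n k)
    _ = k * (1 + Real.log (n / k)) := by
      rw [Real.log_pow, mul_div_assoc, Real.log_mul (exp_pos 1).ne' (by positivity), log_exp]

theorem Nat.cast_mul_sub_one_div_two_le_sq_div_two (n : ℕ) :
    ((n * (n - 1) / 2 : ℕ) : ℝ) ≤ (n : ℝ) ^ 2 / 2 := by
  calc ((n * (n - 1) / 2 : ℕ) : ℝ) ≤ ((n * (n - 1) : ℕ) : ℝ) / 2 := Nat.cast_div_le
    _ ≤ ((n * n : ℕ) : ℝ) / 2 := by gcongr; exact n.sub_le 1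
    _ = (n : ℝ) ^ 2 / 2 := by push_cast; ring

theorem sFun_le_half {x : ℝ} (hx : 0 ≤ x) : sFun x ≤ 1 / 2 := by
  unfold sFun
  split_ifs with h0
  · norm_num
  · have hx' : 0 < x := lt_of_le_of_ne hx (Ne.symm h0)
    have hlog : x * (1 - x⁻¹) ≤ x * log x := by gcongr; exact one_sub_inv_le_log_of_pos hx'
    rw [mul_sub, mul_inv_cancel₀ h0] at hlog
    linarith

theorem mul_sFun_two_mul_div {n m : ℝ} (hn : 0 < n) (hm : 0 < m) :
    n * sFun (2 * m / n) = m * (1 - log (2 * m / n)) := by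
  rw [sFun, if_neg (by positivity)]
  field_simp

/-- If `m ≤ n(n-1)/2`, then `log (binom(n(n-1)/2, m)) ≤ m·log n + n·s(2m/n)`, and in
particular `log (binom(n(n-1)/2, m)) ≤ m·log n + n/2`. -/
theorem log_choose_le (n m : ℕ) (h : m ≤ n * (n - 1) / 2) :
    Real.log ((n * (n - 1) / 2).choose m : ℝ) ≤
        (m : ℝ) * Real.log n + (n : ℝ) * sFun (2 * (m : ℝ) / (n : ℝ)) ∧
      Real.log ((n * (n - 1) / 2).choose m : ℝ) ≤ (m : ℝ) * Real.log n + (n : ℝ) / 2 := by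
  have first : Real.log ((n * (n - 1) / 2).choose m : ℝ) ≤
      (m : ℝ) * Real.log n + (n : ℝ) * sFun (2 * (m : ℝ) / (n : ℝ)) := by
    rcases m.eq_zero_or_pos with rfl | hm
    · simp [sFun]
    have hn : 0 < n := Nat.pos_of_ne_zero (by rintro rfl; simp at h; omega)
    have hm' : (0 : ℝ) < m := by exact_mod_cast hm
    have hn' : (0 : ℝ) < n := by exact_mod_cast hn
    calc Real.log ((n * (n - 1) / 2).choose m : ℝ)
        ≤ m * (1 + log ((n * (n - 1) / 2 : ℕ) / m)) := Nat.log_choose_le_mul_one_add_log_div hm h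
      _ ≤ m * (1 + log ((n : ℝ) ^ 2 / 2 / m)) := by
        gcongr
        · have : (0 : ℝ) < (n * (n - 1) / 2 : ℕ) := by exact_mod_cast hm.trans_le h
          positivity
        · exact Nat.cast_mul_sub_one_div_two_le_sq_div_two n
      _ = m * log n + n * sFun (2 * m / n) := by
        rw [mul_sFun_two_mul_div hn' hm', show (n : ℝ) ^ 2 / 2 / m = n / (2 * m / n) by
          field_simp, log_div hn'.ne' (by positivity)]
        ring
  refine ⟨first, first.trans ?_⟩
  have hs := mul_le_mul_of_nonneg_left (sFun_le_half (x := 2 * (m : ℝ) / n) (by positivity))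
    n.cast_nonneg
  linarith
end

section
/- Let Ξ and Θ be finite sets. Fix n ∈ ℕ, a symmetric edge mark count vector m = (m(x,x'))_{x,x' ∈ Ξ} of nonnegative integers with m(x,x') = m(x',x), and a vertex mark count vector u = (u(θ))_{θ ∈ Θ} of nonnegative integers. Suppose Σ_{x ≤ x'} m(x,x') ≤ binom(n,2) and Σ_θ u(θ) = n. Then the number of simple marked graphs on vertex set {1,…,n} with edge mark count vector m and vertex mark count vector u equals (n! / Π_θ u(θ)!) · ((n(n-1)/2)! / (Π_{x ≤ x'} m(x,x')! · (n(n-1)/2 - Σ_{x≤x'} m(x,x'))!)) · 2^{Σ_{x < x'} m(x,x')}. -/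
/-!
A marked graph is a vertex marking together with an edge marking, and the two count conditions
constrain the two components independently.

The vertex markings with `u θ` vertices of each mark `θ` form one orbit of `Perm (Fin n)` acting
by precomposition; the stabilizer permutes each fibre, so orbit–stabilizer gives the multinomial
`n! / ∏ θ, (u θ)!`.

An edge marking assigns to each of the `N = n.choose 2` vertex pairs an element of
`Option (Ξ × Ξ)`. Forgetting the orientation of the half-marks maps it to a labelling by
`Option (Sym2 Ξ)`, in which `m x x'` pairs carry `s(x, x')` and the remaining `N - Σ m` carry
`none`; there are `N! / (∏ (m x x')! · (N - Σ m)!)` such labellings, and each pair labelled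
`s(x, x')` can be oriented in `2` ways if `x ≠ x'` and in `1` way if `x = x'`.
-/

open Finset Equiv MulAction

section Multinomial

variable {α L : Type*}

lemma exists_fun_card_fiber_eq [Fintype α] [Fintype L] (c : L → ℕ)
    (hc : ∑ ℓ, c ℓ = Fintype.card α) : ∃ f : α → L, ∀ ℓ, Nat.card {a // f a = ℓ} = c ℓ := by
  obtain ⟨e⟩ : Nonempty (α ≃ Σ ℓ, Fin (c ℓ)) :=
    Fintype.card_eq.mp (by rw [Fintype.card_sigma]; simp [hc])
  refine ⟨fun a => (e a).1, fun ℓ => ?_⟩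
  rw [Nat.card_congr ((e.subtypeEquiv fun _ => Iff.rfl).trans (sigmaSubtype ℓ)),
    Nat.card_fin]

lemma mem_orbit_domMulAct_iff [Finite α] {f g : α → L} :
    g ∈ orbit (Perm α)ᵈᵐᵃ f ↔ ∀ ℓ, Nat.card {a // g a = ℓ} = Nat.card {a // f a = ℓ} := by
  constructor
  · rintro ⟨σ, rfl⟩ ℓ
    exact Nat.card_congr ((DomMulAct.mk.symm σ).subtypeEquiv fun _ => Iff.rfl)
  · intro h
    have e (ℓ : L) : {a // g a = ℓ} ≃ {a // f a = ℓ} := (Finite.card_eq.mp (h ℓ)).some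
    exact ⟨DomMulAct.mk (ofFiberEquiv e), funext fun a => ofFiberEquiv_map e a⟩

lemma card_stabilizer_domMulAct [Fintype α] [Fintype L] (f : α → L) :
    Nat.card (stabilizer (Perm α)ᵈᵐᵃ f) = ∏ ℓ, (Nat.card {a // f a = ℓ}).factorial := by
  classical
  rw [Nat.card_congr (subtypeEquiv (q := fun g : Perm α => f ∘ g = f) DomMulAct.mk.symm
      fun _ => DomMulAct.mem_stabilizer_iff),
    Nat.card_eq_fintype_card, DomMulAct.stabilizer_card]
  simp only [Nat.card_eq_fintype_card]

theorem card_fun_card_fiber_eq_mul_prod_factorial [Fintype α] [Fintype L] (c : L → ℕ)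
    (hc : ∑ ℓ, c ℓ = Fintype.card α) :
    Nat.card {f : α → L // ∀ ℓ, Nat.card {a // f a = ℓ} = c ℓ} * ∏ ℓ, (c ℓ).factorial
      = (Fintype.card α).factorial := by
  obtain ⟨f, hf⟩ := exists_fun_card_fiber_eq c hc
  have horbit : {g : α → L // ∀ ℓ, Nat.card {a // g a = ℓ} = c ℓ} ≃ orbit (Perm α)ᵈᵐᵃ f :=
    subtypeEquivRight fun g => by simp only [mem_orbit_domMulAct_iff, hf]
  have hstab := card_stabilizer_domMulAct f
  simp only [hf] at hstab
  rw [Nat.card_congr horbit, ← hstab, Nat.card_coe_set_eq, ← index_stabilizer, mul_comm,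
    Subgroup.card_mul_index, Nat.card_congr DomMulAct.mk.symm, Nat.card_perm,
    Nat.card_eq_fintype_card]

end Multinomial

section Lift

variable {S V L : Type*} [Fintype S] [Fintype L]

lemma card_comp_eq_eq_prod_pow (lab : V → L) (f : S → L) :
    Nat.card {g : S → V // lab ∘ g = f}
      = ∏ ℓ, Nat.card {v // lab v = ℓ} ^ Nat.card {s // f s = ℓ} := by
  classical
  have e : {g : S → V // lab ∘ g = f} ≃ ∀ s, {v // lab v = f s} :=
    (subtypeEquivRight fun _ => funext_iff).trans
      (subtypePiEquivPi (p := fun s v => lab v = f s))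
  rw [Nat.card_congr e, Nat.card_pi, ← Fintype.prod_fiberwise f]
  refine Finset.prod_congr rfl fun ℓ _ => ?_
  rw [Finset.prod_congr rfl fun s _ => by rw [s.2], Finset.prod_const, Finset.card_univ,
    Nat.card_eq_fintype_card (α := {s // f s = ℓ})]

theorem card_comp_card_fiber_eq [Finite V] (lab : V → L) (c : L → ℕ) :
    Nat.card {g : S → V // ∀ ℓ, Nat.card {s // lab (g s) = ℓ} = c ℓ}
      = Nat.card {f : S → L // ∀ ℓ, Nat.card {s // f s = ℓ} = c ℓ} *
        ∏ ℓ, Nat.card {v // lab v = ℓ} ^ c ℓ := by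
  let T := {f : S → L // ∀ ℓ, Nat.card {s // f s = ℓ} = c ℓ}
  let π : {g : S → V // ∀ ℓ, Nat.card {s // lab (g s) = ℓ} = c ℓ} → T :=
    fun g => ⟨lab ∘ g, g.2⟩
  have hfiber (f : T) : {g // π g = f} ≃ {g : S → V // lab ∘ g = f} :=
    { toFun g := ⟨g.1.1, congrArg Subtype.val g.2⟩
      invFun g := ⟨⟨g.1, fun ℓ =>
        (congrArg (fun h => Nat.card {s // h s = ℓ}) g.2).trans (f.2 ℓ)⟩, Subtype.ext g.2⟩
      left_inv _ := rfl
      right_inv _ := rfl }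
  have := Fintype.ofFinite T
  rw [← Nat.card_congr (sigmaFiberEquiv π), Nat.card_sigma]
  simp only [Nat.card_congr (hfiber _), card_comp_eq_eq_prod_pow]
  rw [Finset.sum_congr rfl fun f _ => Finset.prod_congr rfl fun ℓ _ => by rw [f.2 ℓ],
    Finset.sum_const, Finset.card_univ, smul_eq_mul, Nat.card_eq_fintype_card]

end Lift

@[to_additive]
lemma prod_sym2_eq_prod_filter_le {α M : Type*} [Fintype α] [LinearOrder α] [CommMonoid M]
    (g : Sym2 α → M) :
    ∏ z, g z = ∏ p ∈ univ.filter (fun p : α × α => p.1 ≤ p.2), g s(p.1, p.2) := by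
  rw [Finset.prod_subtype (p := fun p : α × α => p.1 ≤ p.2) _ (fun p => by simp)]
  exact Fintype.prod_equiv Sym2.sortEquiv _ _ fun z =>
    congrArg g (Sym2.sortEquiv.symm_apply_apply z).symm

lemma card_uncurry_sym2Mk_fiber {α : Type*} [DecidableEq α] (z : Sym2 α) :
    Nat.card {p : α × α // Function.uncurry Sym2.mk p = z} = if z.IsDiag then 1 else 2 := by
  induction z using Sym2.ind with
  | _ x y =>
  have hfiber (p : α × α) :
      Function.uncurry Sym2.mk p = s(x, y) ↔ p ∈ ({(x, y), (y, x)} : Finset (α × α)) := by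
    obtain ⟨a, b⟩ := p
    simp
  rw [Nat.card_congr (subtypeEquivRight hfiber), Nat.card_eq_fintype_card, Fintype.card_coe]
  by_cases h : x = y
  · simp [h]
  · simp [h, Ne.symm h]

lemma card_optionMap_fiber_some {β γ : Type*} (f : β → γ) (c : γ) :
    Nat.card {v // Option.map f v = some c} = Nat.card {b // f b = c} := by
  refine (Nat.card_eq_of_bijective (fun b => ⟨some b.1, by simp [b.2]⟩) ⟨?_, ?_⟩).symm
  · intro a b h; simpa [Subtype.ext_iff] using h
  · rintro ⟨v, hv⟩
    obtain ⟨b, rfl, hb⟩ := Option.map_eq_some_iff.mp hv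
    exact ⟨⟨b, hb⟩, rfl⟩

lemma forall_card_fiber_option_iff {S β : Type*} [Fintype S] [Fintype β] (f : S → Option β)
    (c : β → ℕ) (hc : ∑ b, c b ≤ Fintype.card S) :
    (∀ b, Nat.card {s // f s = some b} = c b) ↔
      ∀ ℓ, Nat.card {s // f s = ℓ} = ℓ.elim (Fintype.card S - ∑ b, c b) c := by
  refine ⟨fun h ℓ => ?_, fun h b => h (some b)⟩
  cases ℓ with
  | some b => exact h b
  | none =>
    have htotal : ∑ ℓ, Nat.card {s // f s = ℓ} = Fintype.card S := by
      rw [← Nat.card_sigma, Nat.card_congr (sigmaFiberEquiv f), Nat.card_eq_fintype_card]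
    simp only [Fintype.sum_option, h] at htotal
    simp only [Option.elim]
    omega

lemma forall_card_eq_some_or_swap_iff {S α : Type*} (g : S → Option (α × α)) (m : α → α → ℕ)
    (hm : ∀ x x', m x x' = m x' x) :
    (∀ x x', Nat.card {s // g s = some (x, x') ∨ g s = some (x', x)} = m x x') ↔
      ∀ z, Nat.card {s // Option.map (Function.uncurry Sym2.mk) (g s) = some z}
        = Sym2.lift ⟨m, hm⟩ z := by
  have hfiber (x x' : α) :
      {s // g s = some (x, x') ∨ g s = some (x', x)}
        ≃ {s // Option.map (Function.uncurry Sym2.mk) (g s) = some s(x, x')} :=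
    subtypeEquivRight fun s => by
      rcases g s with _ | ⟨a, b⟩ <;> simp [or_comm, and_comm, eq_comm]
  refine ⟨fun h z => ?_, fun h x x' => ?_⟩
  · induction z using Sym2.ind with
    | _ x x' => rw [← Nat.card_congr (hfiber x x'), h, Sym2.lift_mk]
  · rw [Nat.card_congr (hfiber x x'), h, Sym2.lift_mk]

lemma prod_card_uncurry_sym2Mk_fiber_pow {α : Type*} [Fintype α] [LinearOrder α] (m : α → α → ℕ)
    (hm : ∀ x x', m x x' = m x' x) :
    ∏ z, Nat.card {p : α × α // Function.uncurry Sym2.mk p = z} ^ Sym2.lift ⟨m, hm⟩ z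
      = 2 ^ ∑ p ∈ univ.filter (fun p : α × α => p.1 < p.2), m p.1 p.2 := by
  have hpow (z : Sym2 α) :
      Nat.card {p : α × α // Function.uncurry Sym2.mk p = z} ^ Sym2.lift ⟨m, hm⟩ z
        = 2 ^ if z.IsDiag then 0 else Sym2.lift ⟨m, hm⟩ z := by
    rw [card_uncurry_sym2Mk_fiber]; split_ifs <;> simp
  rw [Finset.prod_congr rfl fun z _ => hpow z, Finset.prod_pow_eq_pow_sum,
    sum_sym2_eq_sum_filter_le]
  have hlt : univ.filter (fun p : α × α => p.1 < p.2)
      = (univ.filter fun p : α × α => p.1 ≤ p.2).filter fun p => p.1 ≠ p.2 := by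
    ext; simp [lt_iff_le_and_ne]
  simp only [hlt, Finset.sum_filter, Sym2.mk_isDiag_iff, Sym2.lift_mk, ite_not]

theorem card_edgeMarkings_mul_prod_factorial {S α : Type*} [Fintype S] [Fintype α] [LinearOrder α]
    (m : α → α → ℕ) (hm : ∀ x x', m x x' = m x' x)
    (hS : ∑ p ∈ univ.filter (fun p : α × α => p.1 ≤ p.2), m p.1 p.2 ≤ Fintype.card S) :
    Nat.card {g : S → Option (α × α) //
        ∀ x x', Nat.card {s // g s = some (x, x') ∨ g s = some (x', x)} = m x x'} *
      ((∏ p ∈ univ.filter (fun p : α × α => p.1 ≤ p.2), (m p.1 p.2).factorial) *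
        (Fintype.card S - ∑ p ∈ univ.filter (fun p : α × α => p.1 ≤ p.2), m p.1 p.2).factorial)
      = (Fintype.card S).factorial *
        2 ^ ∑ p ∈ univ.filter (fun p : α × α => p.1 < p.2), m p.1 p.2 := by
  set M := Sym2.lift ⟨m, hm⟩
  have hM : ∑ z, M z = ∑ p ∈ univ.filter (fun p : α × α => p.1 ≤ p.2), m p.1 p.2 :=
    sum_sym2_eq_sum_filter_le M
  set c : Option (Sym2 α) → ℕ := fun ℓ => ℓ.elim (Fintype.card S - ∑ z, M z) M
  have hc : ∑ ℓ, c ℓ = Fintype.card S := by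
    simp only [c, Fintype.sum_option, Option.elim]
    omega
  have hfact : ∏ ℓ, (c ℓ).factorial
      = (Fintype.card S - ∑ p ∈ univ.filter (fun p : α × α => p.1 ≤ p.2), m p.1 p.2).factorial *
        ∏ p ∈ univ.filter (fun p : α × α => p.1 ≤ p.2), (m p.1 p.2).factorial := by
    simp only [c, Fintype.prod_option, Option.elim, hM, prod_sym2_eq_prod_filter_le, M,
      Sym2.lift_mk]
  have hpow : ∏ ℓ, Nat.card {v // Option.map (Function.uncurry Sym2.mk) v = ℓ} ^ c ℓ
      = 2 ^ ∑ p ∈ univ.filter (fun p : α × α => p.1 < p.2), m p.1 p.2 := by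
    simp only [Fintype.prod_option, Option.map_eq_none_iff, Nat.card_unique, one_pow, one_mul,
      card_optionMap_fiber_some, c, Option.elim, M, prod_card_uncurry_sym2Mk_fiber_pow]
  rw [Nat.card_congr (subtypeEquivRight fun g =>
      (forall_card_eq_some_or_swap_iff g m hm).trans (forall_card_fiber_option_iff _ M (hM ▸ hS))),
    card_comp_card_fiber_eq, ← card_fun_card_fiber_eq_mul_prod_factorial c hc, hfact, ← hpow]
  ring

/-- A marked graph on `Fin n` is encoded by its vertex marks together with, for each pair
`v < w`, either no edge or the pair of half-marks of the edge (toward `v`, toward `w`). -/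
theorem card_marked_graphs (n K J : ℕ) (m : Fin K → Fin K → ℕ) (u : Fin J → ℕ)
    (hmsym : ∀ x x', m x x' = m x' x)
    (hm : (∑ p ∈ univ.filter (fun p : Fin K × Fin K => p.1 ≤ p.2), m p.1 p.2) ≤ n.choose 2)
    (hu : (∑ θ, u θ) = n) :
    Nat.card {G : (Fin n → Fin J) × ({p : Fin n × Fin n // p.1 < p.2} → Option (Fin K × Fin K)) //
        (∀ θ, Nat.card {v : Fin n // G.1 v = θ} = u θ) ∧
        (∀ x x', Nat.card {p : {p : Fin n × Fin n // p.1 < p.2} //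
            G.2 p = some (x, x') ∨ G.2 p = some (x', x)} = m x x')} *
      ((∏ θ, (u θ).factorial) *
        (∏ p ∈ univ.filter (fun p : Fin K × Fin K => p.1 ≤ p.2), (m p.1 p.2).factorial) *
        (n * (n - 1) / 2 - ∑ p ∈ univ.filter (fun p : Fin K × Fin K => p.1 ≤ p.2),
          m p.1 p.2).factorial) =
    n.factorial * (n * (n - 1) / 2).factorial *
      2 ^ (∑ p ∈ univ.filter (fun p : Fin K × Fin K => p.1 < p.2), m p.1 p.2) := by
  have hpairs : Fintype.card {p : Fin n × Fin n // p.1 < p.2} = n * (n - 1) / 2 := by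
    rw [Fintype.card_subtype, Fintype.card_product_filter_lt, Fintype.card_fin,
      Nat.choose_two_right]
  have hvertices := card_fun_card_fiber_eq_mul_prod_factorial u (α := Fin n)
    (by rw [hu, Fintype.card_fin])
  have hedges := card_edgeMarkings_mul_prod_factorial m hmsym
    (S := {p : Fin n × Fin n // p.1 < p.2}) (by rwa [hpairs, ← Nat.choose_two_right])
  rw [Fintype.card_fin] at hvertices
  rw [hpairs] at hedges
  rw [mul_assoc n.factorial, ← hvertices, ← hedges, Nat.card_congr (subtypeProdEquivProd
      (p := fun f : Fin n → Fin J => ∀ θ, Nat.card {v // f v = θ} = u θ)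
      (q := fun g : {p : Fin n × Fin n // p.1 < p.2} → Option (Fin K × Fin K) =>
        ∀ x x', Nat.card {p // g p = some (x, x') ∨ g p = some (x', x)} = m x x')),
    Nat.card_prod]
  ring
end
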